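/- arXiv:2505.02379 — 4 statements merged into one kernel-verified Lean document; each statement's English description precedes it below -/
import Mathlib

section
/- Let χ : ℝ → ℝ be continuous, bounded on a neighborhood of the origin, and satisfy M_α(χ) < ∞ for some α > 0. Then for every γ > 0, the tail sums ∑_{k ∈ ℤ, |wx−k| > γw} |χ(wx−k)| converge to 0 as w → +∞, uniformly with respect to x ∈ ℝ. -/
/-!
A Markov-type inequality: on the tail `|w x - k| > γ w` each term satisfies
`|χ(w x - k)| ≤ (γ w)^(-α) |w x - k|^α |χ(w x - k)|`, so the whole tail sum is at most
`(γ w)^(-α) M_α(χ)`, a bound independent of `x` which tends to `0` as `w → ∞`.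
-/

open Real Filter

/-- The discrete absolute moment of order `α` of `χ` (valued in `ℝ≥0∞`). -/
noncomputable def Dmom (χ : ℝ → ℝ) (α : ℝ) : ENNReal :=
  ⨆ u : ℝ, ∑' k : ℤ, ENNReal.ofReal (|u - (k : ℝ)| ^ α * |χ (u - (k : ℝ))|)

open Topology

lemma ite_lt_abs_le_rpow_inv_mul {r α : ℝ} (hr : 0 < r) (hα : 0 ≤ α) (t a : ℝ) :
    (if r < |t| then |a| else 0) ≤ (r ^ α)⁻¹ * (|t| ^ α * |a|) := by
  split_ifs with h
  · have : 0 < r ^ α := rpow_pos_of_pos hr α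
    calc |a| = (r ^ α)⁻¹ * (r ^ α * |a|) := by field_simp
      _ ≤ (r ^ α)⁻¹ * (|t| ^ α * |a|) := by gcongr
  · positivity

lemma tsum_le_Dmom (χ : ℝ → ℝ) (α u : ℝ) :
    ∑' k : ℤ, ENNReal.ofReal (|u - (k : ℝ)| ^ α * |χ (u - (k : ℝ))|) ≤ Dmom χ α :=
  le_iSup (fun v : ℝ => ∑' k : ℤ, ENNReal.ofReal (|v - k| ^ α * |χ (v - k)|)) u

lemma tsum_tail_le_rpow_inv_mul_Dmom (χ : ℝ → ℝ) {r α : ℝ} (hr : 0 < r) (hα : 0 ≤ α)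
    (u : ℝ) :
    ∑' k : ℤ, ENNReal.ofReal (if r < |u - (k : ℝ)| then |χ (u - (k : ℝ))| else 0)
      ≤ ENNReal.ofReal ((r ^ α)⁻¹) * Dmom χ α :=
  calc ∑' k : ℤ, ENNReal.ofReal (if r < |u - (k : ℝ)| then |χ (u - (k : ℝ))| else 0)
      ≤ ∑' k : ℤ, ENNReal.ofReal ((r ^ α)⁻¹) *
          ENNReal.ofReal (|u - (k : ℝ)| ^ α * |χ (u - (k : ℝ))|) :=
        ENNReal.tsum_le_tsum fun k => by
          rw [← ENNReal.ofReal_mul (by positivity)]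
          exact ENNReal.ofReal_le_ofReal (ite_lt_abs_le_rpow_inv_mul hr hα _ _)
    _ = ENNReal.ofReal ((r ^ α)⁻¹) *
          ∑' k : ℤ, ENNReal.ofReal (|u - (k : ℝ)| ^ α * |χ (u - (k : ℝ))|) :=
        ENNReal.tsum_mul_left
    _ ≤ ENNReal.ofReal ((r ^ α)⁻¹) * Dmom χ α := by
        gcongr
        exact tsum_le_Dmom χ α u

lemma tendsto_ofReal_rpow_inv_mul_atTop_zero {γ α : ℝ} (hγ : 0 < γ) (hα : 0 < α)
    {M : ENNReal} (hM : M ≠ ⊤) :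
    Tendsto (fun w : ℝ => ENNReal.ofReal (((γ * w) ^ α)⁻¹) * M) atTop (𝓝 0) := by
  have hinv : Tendsto (fun w : ℝ => ((γ * w) ^ α)⁻¹) atTop (𝓝 0) :=
    tendsto_inv_atTop_zero.comp
      ((tendsto_rpow_atTop hα).comp (tendsto_id.const_mul_atTop hγ))
  simpa using ENNReal.Tendsto.mul_const (ENNReal.tendsto_ofReal hinv) (Or.inr hM)

theorem tail_sums_tendsto_zero_uniformly_general (χ : ℝ → ℝ)
    (α : ℝ) (hα : 0 < α) (hM : Dmom χ α < ⊤) (γ : ℝ) (hγ : 0 < γ) :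
    ∀ ε : ℝ, 0 < ε → ∃ W : ℝ, ∀ w : ℝ, W ≤ w → ∀ x : ℝ,
      (∑' k : ℤ, ENNReal.ofReal
          (if γ * w < |w * x - (k : ℝ)| then |χ (w * x - (k : ℝ))| else 0))
        < ENNReal.ofReal ε := by
  intro ε hε
  have hsmall : ∀ᶠ w : ℝ in atTop,
      ENNReal.ofReal (((γ * w) ^ α)⁻¹) * Dmom χ α < ENNReal.ofReal ε :=
    (tendsto_ofReal_rpow_inv_mul_atTop_zero hγ hα hM.ne).eventually
      (gt_mem_nhds (ENNReal.ofReal_pos.2 hε))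
  have hpos : ∀ᶠ w : ℝ in atTop, 0 < γ * w :=
    (tendsto_id.const_mul_atTop hγ).eventually_gt_atTop 0
  obtain ⟨W, hW⟩ := (hsmall.and hpos).exists_forall_of_atTop
  refine ⟨W, fun w hw x => ?_⟩
  obtain ⟨hlt, hγw⟩ := hW w hw
  exact (tsum_tail_le_rpow_inv_mul_Dmom χ hγw hα.le (w * x)).trans_lt hlt

theorem tail_sums_tendsto_zero_uniformly (χ : ℝ → ℝ) (hχ : Continuous χ)
    (hbdd : ∃ C δ : ℝ, 0 < δ ∧ ∀ x : ℝ, |x| ≤ δ → |χ x| ≤ C)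
    (α : ℝ) (hα : 0 < α) (hM : Dmom χ α < ⊤) (γ : ℝ) (hγ : 0 < γ) :
    ∀ ε : ℝ, 0 < ε → ∃ W : ℝ, ∀ w : ℝ, W ≤ w → ∀ x : ℝ,
      (∑' k : ℤ, ENNReal.ofReal
          (if γ * w < |w * x - (k : ℝ)| then |χ (w * x - (k : ℝ))| else 0))
        < ENNReal.ofReal ε :=
  tail_sums_tendsto_zero_uniformly_general χ α hα hM γ hγ
end

section
/- Let χ be a continuous kernel satisfying the partition of unity ∑_{k∈ℤ} χ(u−k) = 1 and M_α(χ) < ∞ for some α > 0. If f : ℝ → ℝ is bounded and continuous at a point x ∈ ℝ, then (S_w^r f)(x) → f(x) as w → +∞, for every fixed r ∈ ℕ⁺. -/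
open MeasureTheory Real Set Filter

set_option maxHeartbeats 1000000

/-- Steklov integral of order `r` with step `1/w`. -/
noncomputable def steklovW (f : ℝ → ℝ) (r : ℕ) (w : ℝ) (x : ℝ) : ℝ :=
  w ^ r *
    ∫ t in Set.Icc (0 : Fin r → ℝ) (fun _ => 1 / w),
      ∑ m ∈ Finset.Icc 1 r,
        (-1 : ℝ) ^ (m + 1) * (r.choose m : ℝ) * f (x + ((m : ℝ) / (r : ℝ)) * (∑ i, t i))

/-- The Steklov sampling operator `(S_w^r f)(x) = ∑_{k∈ℤ} f_{r,1/w}(k/w) χ(wx−k)`. -/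
noncomputable def SteklovS (χ f : ℝ → ℝ) (r : ℕ) (w : ℝ) (x : ℝ) : ℝ :=
  ∑' k : ℤ, steklovW f r w ((k : ℝ) / w) * χ (w * x - (k : ℝ))

section Aux

lemma qmp_sum (r : ℕ) (hr : 1 ≤ r) (c : ℝ) (hc : c ≠ 0) (y : ℝ) :
    Measure.QuasiMeasurePreserving (fun t : Fin r → ℝ => y + c * ∑ i, t i) volume volume := by
  let L : (Fin r → ℝ) →ₗ[ℝ] ℝ :=
    { toFun := fun t => ∑ i, t i
      map_add' := fun a b => by simp [Finset.sum_add_distrib]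
      map_smul' := fun m a => by simp [Finset.mul_sum] }
  have hsurj : Function.Surjective L := by
    intro s
    refine ⟨fun _ => s / r, ?_⟩
    have : (r : ℝ) ≠ 0 := by positivity
    simp [L, Finset.sum_const, Finset.card_univ]
    field_simp
  have hqL : Measure.QuasiMeasurePreserving (L : (Fin r → ℝ) → ℝ) volume volume := by
    obtain ⟨C, hC, hmap⟩ := L.exists_map_addHaar_eq_smul_addHaar volume volume hsurj
    refine ⟨L.continuous_of_finiteDimensional.measurable, ?_⟩
    rw [hmap]
    exact Measure.AbsolutelyContinuous.rfl.smul_left _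
  have hqa : Measure.QuasiMeasurePreserving (fun s : ℝ => y + c * s) volume volume := by
    have h1 : Measure.QuasiMeasurePreserving (fun s : ℝ => c * s) volume volume := by
      refine ⟨(measurable_const_mul c), ?_⟩
      rw [Real.map_volume_mul_left hc]
      exact Measure.AbsolutelyContinuous.rfl.smul_left _
    exact ((measurePreserving_add_left volume y).quasiMeasurePreserving).comp h1
  exact hqa.comp hqL

lemma sum_alt (r : ℕ) (hr : 1 ≤ r) :
    ∑ m ∈ Finset.Icc 1 r, (-1 : ℝ) ^ (m + 1) * (r.choose m : ℝ) = 1 := by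
  have h0 : ∑ i ∈ Finset.range (r + 1), (-1 : ℤ) ^ i * r.choose i = 0 := by
    rw [Int.alternating_sum_range_choose]
    simp [Nat.one_le_iff_ne_zero.mp hr]
  have hrange : Finset.range (r + 1) = insert 0 (Finset.Icc 1 r) := by
    ext m; simp [Nat.lt_succ_iff]; omega
  rw [hrange, Finset.sum_insert (by simp)] at h0
  simp only [pow_zero, one_mul, Nat.choose_zero_right, Nat.cast_one] at h0
  have h1 : ∑ m ∈ Finset.Icc 1 r, (-1 : ℤ) ^ m * r.choose m = -1 := by linarith
  have h2 : ∑ m ∈ Finset.Icc 1 r, (-1 : ℝ) ^ m * (r.choose m : ℝ) = -1 := by exact_mod_cast h1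
  have h3 : ∑ m ∈ Finset.Icc 1 r, (-1 : ℝ) ^ (m + 1) * (r.choose m : ℝ)
      = - ∑ m ∈ Finset.Icc 1 r, (-1 : ℝ) ^ m * (r.choose m : ℝ) := by
    rw [← Finset.sum_neg_distrib]
    exact Finset.sum_congr rfl fun m _ => by ring
  rw [h3, h2]; norm_num

lemma sum_choose' (r : ℕ) : ∑ m ∈ Finset.Icc 1 r, (r.choose m : ℝ) = 2 ^ r - 1 := by
  have h0 : ∑ i ∈ Finset.range (r + 1), (r.choose i : ℝ) = 2 ^ r := by
    rw [← Nat.cast_sum, Nat.sum_range_choose]; push_cast; ring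
  have hrange : Finset.range (r + 1) = insert 0 (Finset.Icc 1 r) := by
    ext m; simp [Nat.lt_succ_iff]; omega
  rw [hrange, Finset.sum_insert (by simp)] at h0
  simp at h0
  linarith

lemma steklovW_est (f : ℝ → ℝ) (hf : AEStronglyMeasurable f volume) (B : ℝ)
    (hB : ∀ z, |f z| ≤ B) (r : ℕ) (hr : 1 ≤ r) (w : ℝ) (hw : 0 < w) (y a ε : ℝ)
    (hε : ∀ z, y ≤ z → z ≤ y + r / w → |f z - a| ≤ ε) :
    |steklovW f r w y - a| ≤ (2 ^ r - 1) * ε := by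
  have hr0 : (0:ℝ) < r := by exact_mod_cast hr
  have hε0 : 0 ≤ ε := le_trans (abs_nonneg _) (hε y le_rfl (le_add_of_nonneg_right (by positivity)))
  set box := Set.Icc (0 : Fin r → ℝ) (fun _ => 1 / w) with hbox
  have hvol : volume box = ENNReal.ofReal ((1 / w) ^ r) := by
    rw [hbox, Real.volume_Icc_pi]
    simp only [Pi.zero_apply, sub_zero, Finset.prod_const, Finset.card_univ, Fintype.card_fin]
    rw [← ENNReal.ofReal_pow (by positivity)]
  have hvolfin : volume box ≠ ⊤ := by rw [hvol]; exact ENNReal.ofReal_ne_top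
  have hvoltoReal : (volume box).toReal = (1 / w) ^ r := by
    rw [hvol, ENNReal.toReal_ofReal (by positivity)]
  haveI hfinm : IsFiniteMeasure (volume.restrict box) :=
    ⟨by rwa [Measure.restrict_apply_univ, lt_top_iff_ne_top]⟩
  have hint : ∀ m ∈ Finset.Icc 1 r,
      IntegrableOn (fun t : Fin r → ℝ => f (y + ((m : ℝ) / (r : ℝ)) * ∑ i, t i)) box volume := by
    intro m hm
    simp only [Finset.mem_Icc] at hm
    have hm0 : (0:ℝ) < m := by exact_mod_cast hm.1
    have hc : ((m : ℝ) / (r : ℝ)) ≠ 0 := by positivity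
    have hmeas : AEStronglyMeasurable (fun t : Fin r → ℝ => f (y + ((m : ℝ) / (r : ℝ)) * ∑ i, t i))
        volume := hf.comp_quasiMeasurePreserving (qmp_sum r hr _ hc y)
    refine ⟨hmeas.restrict, ?_⟩
    exact HasFiniteIntegral.of_bounded (C := B) (Eventually.of_forall fun t => hB _)
  have hconst : IntegrableOn (fun _ : Fin r → ℝ => a) box volume :=
    integrableOn_const hvolfin
  have harg : ∀ m ∈ Finset.Icc 1 r, ∀ t ∈ box,
      y ≤ y + ((m : ℝ) / (r : ℝ)) * ∑ i, t i ∧ y + ((m : ℝ) / (r : ℝ)) * ∑ i, t i ≤ y + r / w := by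
    intro m hm t ht
    simp only [Finset.mem_Icc] at hm
    obtain ⟨ht0, ht1⟩ := ht
    have hsum0 : (0:ℝ) ≤ ∑ i, t i := Finset.sum_nonneg fun i _ => ht0 i
    have hsum1 : ∑ i, t i ≤ (r : ℝ) / w := by
      calc ∑ i, t i ≤ ∑ _i : Fin r, (1 / w) := Finset.sum_le_sum fun i _ => ht1 i
        _ = (r : ℝ) / w := by simp [Finset.sum_const, Finset.card_univ]; ring
    have hm1 : ((m : ℝ) / (r : ℝ)) ≤ 1 := by
      rw [div_le_one hr0]; exact_mod_cast hm.2
    have hm0 : (0:ℝ) ≤ (m : ℝ) / (r : ℝ) := by positivity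
    constructor
    · nlinarith
    · nlinarith
  set G : (Fin r → ℝ) → ℝ := fun t =>
    ∑ m ∈ Finset.Icc 1 r,
      (-1 : ℝ) ^ (m + 1) * (r.choose m : ℝ) * (f (y + ((m : ℝ) / (r : ℝ)) * ∑ i, t i) - a)
    with hGdef
  have hGint : IntegrableOn G box volume := by
    apply integrable_finset_sum
    intro m hm
    exact (((hint m hm).sub hconst).const_mul _)
  have h3 : ∀ m ∈ Finset.Icc 1 r, (∫ t in box,
        (-1 : ℝ) ^ (m + 1) * (r.choose m : ℝ) * (f (y + ((m : ℝ) / (r : ℝ)) * ∑ i, t i) - a))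
      = (∫ t in box,
          (-1 : ℝ) ^ (m + 1) * (r.choose m : ℝ) * f (y + ((m : ℝ) / (r : ℝ)) * ∑ i, t i))
        - (-1 : ℝ) ^ (m + 1) * (r.choose m : ℝ) * (a * (1 / w) ^ r) := by
    intro m hm
    rw [integral_const_mul, integral_sub (hint m hm) hconst, setIntegral_const, measureReal_def, hvoltoReal,
      smul_eq_mul, integral_const_mul]
    ring
  have h4 : (∫ t in box, G t)
      = (∫ t in box, ∑ m ∈ Finset.Icc 1 r,
          (-1 : ℝ) ^ (m + 1) * (r.choose m : ℝ) * f (y + ((m : ℝ) / (r : ℝ)) * ∑ i, t i))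
        - a * (1 / w) ^ r := by
    have h4a := integral_finset_sum (μ := volume.restrict box) (Finset.Icc 1 r)
      (f := fun m (t : Fin r → ℝ) =>
        (-1:ℝ)^(m+1) * (r.choose m : ℝ) * (f (y + ((m:ℝ)/(r:ℝ)) * ∑ i, t i) - a))
      (fun m hm => ((hint m hm).sub hconst).const_mul _)
    have h5 := integral_finset_sum (μ := volume.restrict box) (Finset.Icc 1 r)
      (f := fun m (t : Fin r → ℝ) =>
        (-1:ℝ)^(m+1) * (r.choose m : ℝ) * f (y + ((m:ℝ)/(r:ℝ)) * ∑ i, t i))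
      (fun m hm => (hint m hm).const_mul _)
    rw [hGdef] at *
    rw [h4a, Finset.sum_congr rfl h3, Finset.sum_sub_distrib, ← h5, ← Finset.sum_mul,
      sum_alt r hr, one_mul]
  have hw1 : w ^ r * (1 / w) ^ r = 1 := by
    rw [one_div, ← mul_pow, mul_inv_cancel₀ hw.ne', one_pow]
  have hkey : steklovW f r w y - a = w ^ r * ∫ t in box, G t := by
    show w ^ r * (∫ t in box, ∑ m ∈ Finset.Icc 1 r,
        (-1 : ℝ) ^ (m + 1) * (r.choose m : ℝ) * f (y + ((m : ℝ) / (r : ℝ)) * ∑ i, t i)) - a = _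
    rw [h4, mul_sub]
    congr 1
    rw [← mul_assoc, mul_comm (w ^ r) a, mul_assoc, hw1, mul_one]
  rw [hkey, abs_mul, abs_pow, abs_of_pos hw]
  have hbound : ‖∫ t in box, G t‖ ≤ ((2 ^ r - 1) * ε) * (volume box).toReal := by
    apply norm_setIntegral_le_of_norm_le_const (hvol ▸ ENNReal.ofReal_lt_top)
    · intro t ht
      rw [Real.norm_eq_abs, hGdef]
      calc |∑ m ∈ Finset.Icc 1 r,
            (-1 : ℝ) ^ (m + 1) * (r.choose m : ℝ) * (f (y + ((m : ℝ) / (r : ℝ)) * ∑ i, t i) - a)|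
          ≤ ∑ m ∈ Finset.Icc 1 r,
            |(-1 : ℝ) ^ (m + 1) * (r.choose m : ℝ) * (f (y + ((m : ℝ) / (r : ℝ)) * ∑ i, t i) - a)| :=
            Finset.abs_sum_le_sum_abs _ _
        _ ≤ ∑ m ∈ Finset.Icc 1 r, (r.choose m : ℝ) * ε := by
            apply Finset.sum_le_sum
            intro m hm
            rw [abs_mul, abs_mul, abs_pow, abs_neg, abs_one, one_pow, one_mul,
              Nat.abs_cast]
            exact mul_le_mul_of_nonneg_left
              (hε _ (harg m hm t ht).1 (harg m hm t ht).2) (Nat.cast_nonneg _)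
        _ = (2 ^ r - 1) * ε := by rw [← Finset.sum_mul, sum_choose' r]
  calc w ^ r * ‖∫ t in box, G t‖ ≤ w ^ r * (((2 ^ r - 1) * ε) * (volume box).toReal) := by
        apply mul_le_mul_of_nonneg_left hbound (by positivity)
    _ = (2 ^ r - 1) * ε := by
        rw [hvoltoReal, mul_comm ((2 ^ r - 1) * ε), ← mul_assoc, hw1, one_mul]

variable {χ : ℝ → ℝ} {α : ℝ}


lemma moment_summable (hα : 0 < α) (hM : Dmom χ α < ⊤) (u : ℝ) :
    Summable fun k : ℤ => |u - (k : ℝ)| ^ α * |χ (u - (k : ℝ))| := by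
  have h1 : (∑' k : ℤ, ENNReal.ofReal (|u - (k : ℝ)| ^ α * |χ (u - (k : ℝ))|)) ≠ ⊤ :=
    ne_top_of_le_ne_top hM.ne
      (le_iSup (fun u : ℝ => ∑' k : ℤ, ENNReal.ofReal (|u - (k : ℝ)| ^ α * |χ (u - (k : ℝ))|)) u)
  have h2 := ENNReal.summable_toReal h1
  convert h2 using 2 with k
  rw [ENNReal.toReal_ofReal (by positivity)]

lemma moment_tsum_le (hα : 0 < α) (hM : Dmom χ α < ⊤) (u : ℝ) :
    (∑' k : ℤ, |u - (k : ℝ)| ^ α * |χ (u - (k : ℝ))|) ≤ (Dmom χ α).toReal := by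
  have h1 : (∑' k : ℤ, ENNReal.ofReal (|u - (k : ℝ)| ^ α * |χ (u - (k : ℝ))|)) ≤ Dmom χ α :=
    le_iSup (fun u : ℝ => ∑' k : ℤ, ENNReal.ofReal (|u - (k : ℝ)| ^ α * |χ (u - (k : ℝ))|)) u
  have h2 : (∑' k : ℤ, |u - (k : ℝ)| ^ α * |χ (u - (k : ℝ))|)
      = (∑' k : ℤ, ENNReal.ofReal (|u - (k : ℝ)| ^ α * |χ (u - (k : ℝ))|)).toReal := by
    rw [ENNReal.tsum_toReal_eq fun k => ENNReal.ofReal_ne_top]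
    exact tsum_congr fun k => (ENNReal.toReal_ofReal (by positivity)).symm
  rw [h2]
  exact ENNReal.toReal_mono hM.ne h1

lemma chi_summable (hα : 0 < α) (hM : Dmom χ α < ⊤) (Cs : ℝ)
    (hCs : ∀ z ∈ Set.Icc (-1 : ℝ) 1, |χ z| ≤ Cs) (u : ℝ) :
    Summable fun k : ℤ => |χ (u - (k : ℝ))| := by
  have hCs0 : 0 ≤ Cs := le_trans (abs_nonneg _) (hCs 0 (by norm_num))
  have hind : Summable fun k : ℤ => (if |u - (k : ℝ)| < 1 then Cs else 0) := by
    apply summable_of_ne_finset_zero (s := Finset.Icc ⌈u - 1⌉ ⌊u + 1⌋)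
    intro k hk
    simp only [Finset.mem_Icc, not_and_or, not_le] at hk
    have : ¬ |u - (k : ℝ)| < 1 := by
      rw [abs_lt, not_and_or, not_lt, not_lt]
      rcases hk with hk | hk
      · right
        have : (k : ℝ) < u - 1 := by
          have h1 : (k : ℝ) ≤ (⌈u - 1⌉ : ℝ) - 1 := by exact_mod_cast Int.le_sub_one_of_lt hk
          have h2 : (⌈u - 1⌉ : ℝ) - 1 < u - 1 := by
            have := Int.ceil_lt_add_one (u - 1); linarith
          linarith
        linarith
      · left
        have : u + 1 < (k : ℝ) := by
          have h1 : (⌊u + 1⌋ : ℝ) + 1 ≤ (k : ℝ) := by exact_mod_cast Int.add_one_le_of_lt hk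
          have h2 : u + 1 < (⌊u + 1⌋ : ℝ) + 1 := Int.lt_floor_add_one (u + 1)
          linarith
        linarith
    simp [this]
  refine Summable.of_nonneg_of_le (fun k => abs_nonneg _) ?_
    (hind.add (moment_summable hα hM u))
  · intro k
    by_cases h : |u - (k : ℝ)| < 1
    · simp only [h, if_true]
      have : 0 ≤ |u - (k : ℝ)| ^ α * |χ (u - (k : ℝ))| := by positivity
      have hmem : u - (k : ℝ) ∈ Set.Icc (-1 : ℝ) 1 := by
        rw [abs_lt] at h; constructor <;> linarith [h.1, h.2]
      linarith [hCs _ hmem]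
    · simp only [h, if_false, zero_add]
      push_neg at h
      have h1 : (1 : ℝ) ≤ |u - (k : ℝ)| ^ α := Real.one_le_rpow h hα.le
      nlinarith [abs_nonneg (χ (u - (k : ℝ)))]

lemma ind_zero (u : ℝ) (Cs : ℝ) (k : ℤ) (hk : k ∉ Finset.Icc ⌈u - 1⌉ ⌊u + 1⌋) :
    (if |u - (k : ℝ)| < 1 then Cs else 0) = 0 := by
  simp only [Finset.mem_Icc, not_and_or, not_le] at hk
  have h : ¬ |u - (k : ℝ)| < 1 := by
    rw [abs_lt, not_and_or, not_lt, not_lt]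
    rcases hk with hk | hk
    · right
      have h1 : (k : ℝ) ≤ (⌈u - 1⌉ : ℝ) - 1 := by exact_mod_cast Int.le_sub_one_of_lt hk
      have h2 : (⌈u - 1⌉ : ℝ) - 1 < u - 1 := by linarith [Int.ceil_lt_add_one (u - 1)]
      linarith
    · left
      have h1 : (⌊u + 1⌋ : ℝ) + 1 ≤ (k : ℝ) := by exact_mod_cast Int.add_one_le_of_lt hk
      have h2 : u + 1 < (⌊u + 1⌋ : ℝ) + 1 := Int.lt_floor_add_one (u + 1)
      linarith
  simp [h]

lemma chi_tsum_le (hα : 0 < α) (hM : Dmom χ α < ⊤) (Cs : ℝ)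
    (hCs : ∀ z ∈ Set.Icc (-1 : ℝ) 1, |χ z| ≤ Cs) (u : ℝ) :
    (∑' k : ℤ, |χ (u - (k : ℝ))|) ≤ 3 * Cs + (Dmom χ α).toReal := by
  have hCs0 : 0 ≤ Cs := le_trans (abs_nonneg _) (hCs 0 (by norm_num))
  have hind : Summable fun k : ℤ => (if |u - (k : ℝ)| < 1 then Cs else 0) :=
    summable_of_ne_finset_zero (s := Finset.Icc ⌈u - 1⌉ ⌊u + 1⌋) (fun k hk => ind_zero u Cs k hk)
  have hmom := moment_summable hα hM u
  have hle : ∀ k : ℤ, |χ (u - (k : ℝ))|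
      ≤ (if |u - (k : ℝ)| < 1 then Cs else 0) + |u - (k : ℝ)| ^ α * |χ (u - (k : ℝ))| := by
    intro k
    by_cases h : |u - (k : ℝ)| < 1
    · simp only [h, if_true]
      have h0 : 0 ≤ |u - (k : ℝ)| ^ α * |χ (u - (k : ℝ))| := by positivity
      have hmem : u - (k : ℝ) ∈ Set.Icc (-1 : ℝ) 1 := by
        rw [abs_lt] at h; constructor <;> linarith [h.1, h.2]
      linarith [hCs _ hmem]
    · simp only [h, if_false, zero_add]
      push_neg at h
      have h1 : (1 : ℝ) ≤ |u - (k : ℝ)| ^ α := Real.one_le_rpow h hα.le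
      nlinarith [abs_nonneg (χ (u - (k : ℝ)))]
  calc (∑' k : ℤ, |χ (u - (k : ℝ))|)
      ≤ ∑' k : ℤ, ((if |u - (k : ℝ)| < 1 then Cs else 0) + |u - (k : ℝ)| ^ α * |χ (u - (k : ℝ))|) :=
        Summable.tsum_le_tsum hle (chi_summable hα hM Cs hCs u) (hind.add hmom)
    _ = (∑' k : ℤ, (if |u - (k : ℝ)| < 1 then Cs else 0))
        + ∑' k : ℤ, |u - (k : ℝ)| ^ α * |χ (u - (k : ℝ))| := Summable.tsum_add hind hmom
    _ ≤ 3 * Cs + (Dmom χ α).toReal := by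
        gcongr
        · have heq : (∑' k : ℤ, (if |u - (k : ℝ)| < 1 then Cs else 0))
              = ∑ k ∈ Finset.Icc ⌈u - 1⌉ ⌊u + 1⌋, (if |u - (k : ℝ)| < 1 then Cs else 0) :=
            tsum_eq_sum (fun k hk => ind_zero u Cs k hk)
          rw [heq]
          have hcard : (Finset.Icc ⌈u - 1⌉ ⌊u + 1⌋).card ≤ 3 := by
            rw [Int.card_Icc]
            have h1 : ⌊u + 1⌋ ≤ ⌈u - 1⌉ + 2 := by
              have a1 : (⌊u + 1⌋ : ℝ) ≤ u + 1 := Int.floor_le _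
              have a2 : u - 1 ≤ (⌈u - 1⌉ : ℝ) := Int.le_ceil _
              have a3 : (⌊u + 1⌋ : ℝ) ≤ (⌈u - 1⌉ : ℝ) + 2 := by linarith
              exact_mod_cast a3
            omega
          calc ∑ k ∈ Finset.Icc ⌈u - 1⌉ ⌊u + 1⌋, (if |u - (k : ℝ)| < 1 then Cs else 0)
              ≤ ∑ _k ∈ Finset.Icc ⌈u - 1⌉ ⌊u + 1⌋, Cs := by
                apply Finset.sum_le_sum
                intro k _
                split <;> simp [hCs0]
            _ = (Finset.Icc ⌈u - 1⌉ ⌊u + 1⌋).card * Cs := by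
                rw [Finset.sum_const, nsmul_eq_mul]
            _ ≤ 3 * Cs := by
                apply mul_le_mul_of_nonneg_right _ hCs0
                exact_mod_cast hcard
        · exact moment_tsum_le hα hM u

lemma chi_far (hα : 0 < α) (hM : Dmom χ α < ⊤) (u d : ℝ) (hd : 0 < d) :
    (∑' k : ℤ, (if d ≤ |u - (k : ℝ)| then |χ (u - (k : ℝ))| else 0))
      ≤ (Dmom χ α).toReal / d ^ α := by
  have hdα : (0:ℝ) < d ^ α := Real.rpow_pos_of_pos hd α
  have hmom := moment_summable hα hM u
  have hdiv : Summable fun k : ℤ => |u - (k : ℝ)| ^ α * |χ (u - (k : ℝ))| / d ^ α :=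
    hmom.div_const _
  have hle : ∀ k : ℤ, (if d ≤ |u - (k : ℝ)| then |χ (u - (k : ℝ))| else 0)
      ≤ |u - (k : ℝ)| ^ α * |χ (u - (k : ℝ))| / d ^ α := by
    intro k
    split
    · rename_i h
      rw [le_div_iff₀ hdα]
      have h1 : d ^ α ≤ |u - (k : ℝ)| ^ α := Real.rpow_le_rpow hd.le h hα.le
      nlinarith [abs_nonneg (χ (u - (k : ℝ)))]
    · positivity
  have hsL : Summable fun k : ℤ => (if d ≤ |u - (k : ℝ)| then |χ (u - (k : ℝ))| else 0) := by
    refine Summable.of_nonneg_of_le (fun k => ?_) hle hdiv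
    split <;> positivity
  calc (∑' k : ℤ, (if d ≤ |u - (k : ℝ)| then |χ (u - (k : ℝ))| else 0))
      ≤ ∑' k : ℤ, |u - (k : ℝ)| ^ α * |χ (u - (k : ℝ))| / d ^ α := Summable.tsum_le_tsum hle hsL hdiv
    _ = (∑' k : ℤ, |u - (k : ℝ)| ^ α * |χ (u - (k : ℝ))|) / d ^ α := tsum_div_const
    _ ≤ (Dmom χ α).toReal / d ^ α := by
        gcongr
        exact moment_tsum_le hα hM u

end Aux

theorem steklov_sampling_pointwise_convergence (χ f : ℝ → ℝ) (hχ : Continuous χ)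
    (hpart : ∀ u : ℝ, HasSum (fun k : ℤ => χ (u - (k : ℝ))) 1)
    (α : ℝ) (hα : 0 < α) (hM : Dmom χ α < ⊤)
    (hf : MeasureTheory.LocallyIntegrable f) (hb : BddAbove (Set.range fun x => |f x|))
    (r : ℕ) (hr : 1 ≤ r) (x : ℝ) (hcont : ContinuousAt f x) :
    Tendsto (fun w : ℝ => SteklovS χ f r w x) atTop (nhds (f x)) := by
  obtain ⟨B, hB⟩ : ∃ B, ∀ z, |f z| ≤ B :=
    ⟨sSup (Set.range fun x => |f x|), fun z => le_csSup hb ⟨z, rfl⟩⟩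
  have hB0 : 0 ≤ B := le_trans (abs_nonneg _) (hB 0)
  obtain ⟨Cs, hCs⟩ : ∃ Cs, ∀ z ∈ Set.Icc (-1 : ℝ) 1, |χ z| ≤ Cs := by
    obtain ⟨C, hC⟩ := isCompact_Icc.exists_bound_of_continuousOn (hχ.continuousOn
      (s := Set.Icc (-1 : ℝ) 1))
    exact ⟨C, fun z hz => hC z hz⟩
  set K0 := 3 * Cs + (Dmom χ α).toReal with hK0def
  have hK00 : 0 ≤ K0 :=
    le_trans (tsum_nonneg fun k : ℤ => abs_nonneg _) (chi_tsum_le hα hM Cs hCs 0)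
  have hfm : AEStronglyMeasurable f volume := hf.aestronglyMeasurable
  have h2r1 : (0:ℝ) ≤ 2 ^ r - 1 := by
    have h1 : (1:ℝ) ^ r ≤ 2 ^ r := pow_le_pow_left₀ (by norm_num) (by norm_num) r
    rw [one_pow] at h1
    linarith
  rw [Metric.tendsto_nhds]
  intro ε hε
  set ε1 := ε / (4 * ((2 ^ r - 1) * K0 + 1)) with hε1def
  have hQ0 : (0:ℝ) ≤ (2 ^ r - 1) * K0 := mul_nonneg h2r1 hK00
  have hε1pos : 0 < ε1 := by
    apply div_pos hε; nlinarith
  have hε1eq : ε1 * (4 * ((2 ^ r - 1) * K0 + 1)) = ε := by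
    rw [hε1def]; field_simp
  obtain ⟨δ, hδpos, hδ⟩ := Metric.continuousAt_iff.1 hcont ε1 hε1pos
  -- eventually facts about w
  have hev1 : ∀ᶠ w : ℝ in atTop, (1:ℝ) ≤ w := eventually_ge_atTop 1
  have hev2 : ∀ᶠ w : ℝ in atTop, (r : ℝ) / w ≤ δ / 4 := by
    have h1 : Tendsto (fun w : ℝ => (r : ℝ) / w) atTop (nhds 0) :=
      tendsto_const_nhds.div_atTop tendsto_id
    exact (h1.eventually_lt_const (by positivity)).mono fun w hw => hw.le
  have hev3 : ∀ᶠ w : ℝ in atTop,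
      2 ^ r * B * ((Dmom χ α).toReal / (w * δ / 2) ^ α) < ε / 2 := by
    have t1 : Tendsto (fun w : ℝ => w * δ / 2) atTop atTop := by
      simpa [mul_div_assoc] using tendsto_id.atTop_mul_const (by positivity : (0:ℝ) < δ / 2)
    have t3 : Tendsto (fun w : ℝ => ((w * δ / 2) ^ α)⁻¹) atTop (nhds 0) :=
      ((tendsto_rpow_atTop hα).comp t1).inv_tendsto_atTop
    have t4 : Tendsto (fun w : ℝ => 2 ^ r * B * ((Dmom χ α).toReal / (w * δ / 2) ^ α))
        atTop (nhds 0) := by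
      have := t3.const_mul (2 ^ r * B * (Dmom χ α).toReal)
      simpa [div_eq_mul_inv, mul_assoc] using this
    exact t4.eventually_lt_const (by positivity)
  filter_upwards [hev1, hev2, hev3] with w hw1 hw2 hw3
  have hw0 : (0:ℝ) < w := lt_of_lt_of_le one_pos hw1
  -- summability of |χ (w x - k)|
  have hχs : Summable fun k : ℤ => |χ (w * x - (k : ℝ))| := chi_summable hα hM Cs hCs (w * x)
  -- global bound on steklovW
  have hWb : ∀ k : ℤ, |steklovW f r w ((k : ℝ) / w)| ≤ (2 ^ r - 1) * B := by
    intro k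
    have := steklovW_est f hfm B hB r hr w hw0 ((k : ℝ) / w) 0 B
      (fun z _ _ => by simpa using hB z)
    simpa using this
  -- main series summability
  have hmainS : Summable fun k : ℤ => steklovW f r w ((k : ℝ) / w) * χ (w * x - (k : ℝ)) := by
    apply Summable.of_abs
    refine Summable.of_nonneg_of_le (fun k => abs_nonneg _)
      (fun k => ?_) (hχs.mul_left ((2 ^ r - 1) * B))
    rw [abs_mul]
    exact mul_le_mul_of_nonneg_right (hWb k) (abs_nonneg _)
  have hfx : HasSum (fun k : ℤ => f x * χ (w * x - (k : ℝ))) (f x) := by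
    simpa using (hpart (w * x)).mul_left (f x)
  set g : ℤ → ℝ := fun k => (steklovW f r w ((k : ℝ) / w) - f x) * χ (w * x - (k : ℝ)) with hgdef
  have heq : ∑' k : ℤ, g k = SteklovS χ f r w x - f x := by
    have h1 : ∀ k : ℤ, g k = steklovW f r w ((k : ℝ) / w) * χ (w * x - (k : ℝ))
        - f x * χ (w * x - (k : ℝ)) := fun k => sub_mul _ _ _
    rw [tsum_congr h1, Summable.tsum_sub hmainS hfx.summable, hfx.tsum_eq]
    rfl
  -- pointwise bound
  set h : ℤ → ℝ := fun k => ((2 ^ r - 1) * ε1) * |χ (w * x - (k : ℝ))|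
      + (2 ^ r * B) * (if w * δ / 2 ≤ |w * x - (k : ℝ)| then |χ (w * x - (k : ℝ))| else 0)
    with hhdef
  have hgb : ∀ k : ℤ, |g k| ≤ h k := by
    intro k
    rw [hgdef, abs_mul]
    by_cases hc : w * δ / 2 ≤ |w * x - (k : ℝ)|
    · -- far case
      have hW : |steklovW f r w ((k : ℝ) / w) - f x| ≤ 2 ^ r * B := by
        have h1 := hWb k
        have h2 := abs_sub (steklovW f r w ((k : ℝ) / w)) (f x)
        have h3 := hB x
        nlinarith
      rw [hhdef]
      simp only [hc, if_true]
      have : |steklovW f r w ((k : ℝ) / w) - f x| * |χ (w * x - (k : ℝ))|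
          ≤ (2 ^ r * B) * |χ (w * x - (k : ℝ))| :=
        mul_le_mul_of_nonneg_right hW (abs_nonneg _)
      nlinarith [abs_nonneg (χ (w * x - (k : ℝ))), mul_nonneg (mul_nonneg h2r1 hε1pos.le)
        (abs_nonneg (χ (w * x - (k : ℝ))))]
    · -- near case
      push_neg at hc
      have hnear : |x - (k : ℝ) / w| < δ / 2 := by
        have heq2 : w * x - (k : ℝ) = w * (x - (k : ℝ) / w) := by field_simp
        rw [heq2, abs_mul, abs_of_pos hw0] at hc
        have h3 : w * |x - (k : ℝ) / w| < w * (δ / 2) := by nlinarith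
        exact (mul_lt_mul_iff_right₀ hw0).1 h3
      have hW : |steklovW f r w ((k : ℝ) / w) - f x| ≤ (2 ^ r - 1) * ε1 := by
        apply steklovW_est f hfm B hB r hr w hw0 ((k : ℝ) / w) (f x) ε1
        intro z hz1 hz2
        have hzx : |z - x| < δ := by
          have h1 : |(k : ℝ) / w - x| < δ / 2 := by rwa [abs_sub_comm] at hnear
          rw [abs_lt] at h1 ⊢
          constructor <;> linarith [hw2, h1.1, h1.2, hz1, hz2]
        have := hδ (by rwa [Real.dist_eq] : dist z x < δ)
        rw [Real.dist_eq] at this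
        exact this.le
      rw [hhdef]
      have h1 : |steklovW f r w ((k : ℝ) / w) - f x| * |χ (w * x - (k : ℝ))|
          ≤ ((2 ^ r - 1) * ε1) * |χ (w * x - (k : ℝ))| :=
        mul_le_mul_of_nonneg_right hW (abs_nonneg _)
      have h2 : (0:ℝ) ≤ (2 ^ r * B) * (if w * δ / 2 ≤ |w * x - (k : ℝ)|
          then |χ (w * x - (k : ℝ))| else 0) := by
        apply mul_nonneg (by positivity)
        split
        · exact abs_nonneg _
        · exact le_rfl
      simp only
      linarith
  -- summabilities for h
  have hfarS : Summable fun k : ℤ => (if w * δ / 2 ≤ |w * x - (k : ℝ)|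
      then |χ (w * x - (k : ℝ))| else 0) := by
    refine Summable.of_nonneg_of_le (fun k => ?_) (fun k => ?_) hχs
    · split
      · exact abs_nonneg _
      · exact le_rfl
    · split
      · exact le_rfl
      · exact abs_nonneg _
  have hhS : Summable h := (hχs.mul_left _).add (hfarS.mul_left _)
  have hgabsS : Summable fun k : ℤ => |g k| :=
    Summable.of_nonneg_of_le (fun k => abs_nonneg _) hgb hhS
  rw [Real.dist_eq, ← heq]
  calc |∑' k : ℤ, g k| ≤ ∑' k : ℤ, |g k| := by
        have h0 : Summable fun k : ℤ => ‖g k‖ := by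
          simpa only [Real.norm_eq_abs] using hgabsS
        have := norm_tsum_le_tsum_norm (f := g) h0
        simpa only [Real.norm_eq_abs] using this
    _ ≤ ∑' k : ℤ, h k := Summable.tsum_le_tsum hgb hgabsS hhS
    _ = ((2 ^ r - 1) * ε1) * (∑' k : ℤ, |χ (w * x - (k : ℝ))|)
        + (2 ^ r * B) * ∑' k : ℤ, (if w * δ / 2 ≤ |w * x - (k : ℝ)|
            then |χ (w * x - (k : ℝ))| else 0) := by
        rw [hhdef, Summable.tsum_add (hχs.mul_left _) (hfarS.mul_left _), tsum_mul_left, tsum_mul_left]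
    _ ≤ ((2 ^ r - 1) * ε1) * K0
        + (2 ^ r * B) * ((Dmom χ α).toReal / (w * δ / 2) ^ α) := by
        have hc1 : (0:ℝ) ≤ (2 ^ r - 1) * ε1 := mul_nonneg h2r1 hε1pos.le
        have hc2 : (0:ℝ) ≤ 2 ^ r * B := mul_nonneg (by positivity) hB0
        gcongr
        · exact chi_tsum_le hα hM Cs hCs (w * x)
        · exact chi_far hα hM (w * x) (w * δ / 2) (by positivity)
    _ < ε := by
        have h5 : ε / 2 = 2 * (ε1 * ((2 ^ r - 1) * K0)) + 2 * ε1 := by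
          rw [← hε1eq]; ring
        have hA : ((2 ^ r - 1) * ε1) * K0 ≤ ε / 2 := by
          nlinarith [mul_nonneg hε1pos.le hQ0]
        linarith [hw3, hA]
end

section
/- Let χ ∈ L¹(ℝ) be continuous with M₀(χ) ≥ 1 finite, and let φ be a convex φ-function. For every continuous compactly supported f : ℝ → ℝ, every r ≥ 2, and every λ > 0, one has I^φ[λ S_w^r f] := ∫_ℝ φ(λ |(S_w^r f)(x)|) dx < +∞ for all w ≥ r; in particular S_w^r f belongs to the space of finite elements E^φ(ℝ). -/
open MeasureTheory Real Set Filter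

/-- Two-point convexity: `φ(t·a) ≤ t·φ(a)` for `t ∈ [0,1]`, `a ≥ 0`. -/
lemma phi_mul_le_aux {φ : ℝ → ℝ} (hφconv : ConvexOn ℝ (Set.Ici 0) φ) (hφ0 : φ 0 = 0)
    {t a : ℝ} (ht0 : 0 ≤ t) (ht1 : t ≤ 1) (ha : 0 ≤ a) : φ (t * a) ≤ t * φ a := by
  have h := hφconv.2 (Set.mem_Ici.2 (le_refl (0:ℝ))) (Set.mem_Ici.2 ha)
    (sub_nonneg.2 ht1) ht0 (by ring)
  simpa [hφ0] using h

theorem steklov_sampling_finite_modular (φ : ℝ → ℝ)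
    (hφc : Continuous φ) (hφm : MonotoneOn φ (Set.Ici 0)) (hφ0 : φ 0 = 0)
    (hφpos : ∀ u : ℝ, 0 < u → 0 < φ u) (hφtop : Tendsto φ atTop atTop)
    (hφconv : ConvexOn ℝ (Set.Ici 0) φ)
    (χ : ℝ → ℝ) (hχ : Continuous χ) (hχ1 : Integrable χ)
    (hsum : ∀ u : ℝ, Summable fun k : ℤ => |χ (u - (k : ℝ))|)
    (M0 : ℝ) (hM0 : IsLUB (Set.range fun u : ℝ => ∑' k : ℤ, |χ (u - (k : ℝ))|) M0)
    (hM0one : 1 ≤ M0)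
    (f : ℝ → ℝ) (hf : Continuous f) (hfc : HasCompactSupport f)
    (r : ℕ) (hr : 2 ≤ r) (lam : ℝ) (hlam : 0 < lam) (w : ℝ) (hw : (r : ℝ) ≤ w) :
    (∫⁻ x : ℝ, ENNReal.ofReal (φ (lam * |SteklovS χ f r w x|))) < ⊤ := by
  have hrpos : (0:ℝ) < (r:ℝ) := by exact_mod_cast (by omega : 0 < r)
  have hw0 : (0:ℝ) < w := lt_of_lt_of_le hrpos hw
  have hM0pos : (0:ℝ) < M0 := lt_of_lt_of_le one_pos hM0one
  -- uniform bound on f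
  obtain ⟨Mf0, hMf0⟩ := hfc.exists_bound_of_continuous hf
  set Mf : ℝ := max Mf0 0 with hMfdef
  have hMf : ∀ x, |f x| ≤ Mf := fun x =>
    le_trans (by simpa [Real.norm_eq_abs] using hMf0 x) (le_max_left _ _)
  have hMfnn : (0:ℝ) ≤ Mf := le_max_right _ _
  -- support radius
  obtain ⟨A0, hA0⟩ := hfc.isBounded.subset_closedBall 0
  set A : ℝ := max A0 0 with hAdef
  have hAnn : (0:ℝ) ≤ A := le_max_right _ _
  have hA : ∀ x : ℝ, A < |x| → f x = 0 := by
    intro x hx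
    apply image_eq_zero_of_notMem_tsupport
    intro hxt
    have := hA0 hxt
    rw [Metric.mem_closedBall, Real.dist_eq, sub_zero] at this
    exact absurd (this.trans (le_max_left _ _)) (not_le.2 hx)
  -- the constant bounding the Steklov means
  set B : ℝ := (∑ m ∈ Finset.Icc 1 r, (r.choose m : ℝ)) * Mf with hBdef
  have hBnn : (0:ℝ) ≤ B :=
    mul_nonneg (Finset.sum_nonneg fun m _ => Nat.cast_nonneg _) hMfnn
  -- the "shift" entering the Steklov mean lies in [0,1]
  have hshift : ∀ (m : ℕ), m ∈ Finset.Icc 1 r →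
      ∀ t : Fin r → ℝ, t ∈ Set.Icc (0 : Fin r → ℝ) (fun _ => 1 / w) →
      0 ≤ ((m : ℝ) / (r : ℝ)) * (∑ i, t i) ∧ ((m : ℝ) / (r : ℝ)) * (∑ i, t i) ≤ 1 := by
    intro m hm t ht
    obtain ⟨ht0, ht1⟩ := ht
    have hsum0 : 0 ≤ ∑ i, t i := Finset.sum_nonneg fun i _ => ht0 i
    have hsum1 : ∑ i, t i ≤ 1 := by
      calc ∑ i, t i ≤ ∑ _i : Fin r, (1/w) := Finset.sum_le_sum fun i _ => ht1 i
        _ = (r:ℝ) * (1/w) := by simp [Finset.sum_const, mul_comm]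
        _ ≤ 1 := by
            rw [mul_one_div, div_le_one hw0]; exact hw
    have hm1 : (m:ℝ) / (r:ℝ) ≤ 1 := by
      rw [div_le_one hrpos]
      exact_mod_cast (Finset.mem_Icc.1 hm).2
    have hm0 : (0:ℝ) ≤ (m:ℝ) / (r:ℝ) := by positivity
    exact ⟨mul_nonneg hm0 hsum0, mul_le_one₀ hm1 hsum0 hsum1⟩
  -- vanishing of the Steklov mean outside a compact set
  have hstk_zero : ∀ y : ℝ, (y < -(A+1) ∨ A < y) → steklovW f r w y = 0 := by
    intro y hy
    unfold steklovW
    rw [setIntegral_congr_fun measurableSet_Icc (g := fun _ => (0:ℝ)), integral_const,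
      smul_zero, mul_zero]
    intro t ht
    apply Finset.sum_eq_zero
    intro m hm
    obtain ⟨hs0, hs1⟩ := hshift m hm t ht
    have hfz : f (y + ((m : ℝ) / (r : ℝ)) * (∑ i, t i)) = 0 := by
      apply hA
      rcases hy with hy | hy
      · have h1 : y + ((m : ℝ) / (r : ℝ)) * (∑ i, t i) < -A := by linarith
        have := neg_le_abs (y + ((m : ℝ) / (r : ℝ)) * (∑ i, t i))
        linarith
      · have := le_abs_self (y + ((m : ℝ) / (r : ℝ)) * (∑ i, t i))
        linarith
    rw [hfz, mul_zero]
  -- uniform bound on the Steklov mean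
  have hstk_bd : ∀ y : ℝ, |steklovW f r w y| ≤ B := by
    intro y
    unfold steklovW
    rw [abs_mul, abs_pow, abs_of_pos hw0]
    have hvol : volume (Set.Icc (0 : Fin r → ℝ) (fun _ => 1 / w)) < ⊤ :=
      (isCompact_Icc).measure_lt_top
    have hbd : ∀ t ∈ Set.Icc (0 : Fin r → ℝ) (fun _ => 1 / w),
        ‖∑ m ∈ Finset.Icc 1 r,
          (-1 : ℝ) ^ (m + 1) * (r.choose m : ℝ) * f (y + ((m : ℝ) / (r : ℝ)) * (∑ i, t i))‖ ≤ B := by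
      intro t _
      calc ‖∑ m ∈ Finset.Icc 1 r, (-1 : ℝ) ^ (m + 1) * (r.choose m : ℝ) *
              f (y + ((m : ℝ) / (r : ℝ)) * (∑ i, t i))‖
          ≤ ∑ m ∈ Finset.Icc 1 r, ‖(-1 : ℝ) ^ (m + 1) * (r.choose m : ℝ) *
              f (y + ((m : ℝ) / (r : ℝ)) * (∑ i, t i))‖ := norm_sum_le _ _
        _ ≤ ∑ m ∈ Finset.Icc 1 r, (r.choose m : ℝ) * Mf := by
            apply Finset.sum_le_sum
            intro m _
            rw [Real.norm_eq_abs, abs_mul, abs_mul, abs_pow, abs_neg, abs_one, one_pow, one_mul,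
              abs_of_nonneg (Nat.cast_nonneg _)]
            exact mul_le_mul_of_nonneg_left (hMf _) (Nat.cast_nonneg _)
        _ = B := by rw [hBdef, Finset.sum_mul]
    have key : _ ≤ B * (volume _).toReal := norm_setIntegral_le_of_norm_le_const hvol hbd
    rw [Real.norm_eq_abs] at key
    have hvolval : (volume (Set.Icc (0 : Fin r → ℝ) (fun _ => 1 / w))).toReal = (1/w)^r := by
      rw [Real.volume_Icc_pi_toReal (fun i => by positivity)]
      simp
    rw [hvolval] at key
    calc w ^ r * |∫ t in Set.Icc (0 : Fin r → ℝ) (fun _ => 1 / w),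
            ∑ m ∈ Finset.Icc 1 r, (-1 : ℝ) ^ (m + 1) * (r.choose m : ℝ) *
              f (y + ((m : ℝ) / (r : ℝ)) * (∑ i, t i))|
        ≤ w ^ r * (B * (1/w)^r) :=
          mul_le_mul_of_nonneg_left key (by positivity)
      _ = B := by
          have h1 : w ^ r * (1/w)^r = 1 := by
            rw [one_div, inv_pow, mul_inv_cancel₀ (pow_ne_zero _ (ne_of_gt hw0))]
          calc w ^ r * (B * (1/w)^r) = B * (w ^ r * (1/w)^r) := by ring
            _ = B := by rw [h1, mul_one]
  -- the finite index set
  set F : Finset ℤ := Finset.Icc ⌊-(A+1)*w⌋ ⌈A*w⌉ with hFdef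
  have hterm_zero : ∀ (x : ℝ) (k : ℤ), k ∉ F →
      steklovW f r w ((k : ℝ) / w) * χ (w * x - (k : ℝ)) = 0 := by
    intro x k hk
    rw [hFdef, Finset.mem_Icc, not_and_or, not_le, not_le] at hk
    have hz : steklovW f r w ((k : ℝ) / w) = 0 := by
      apply hstk_zero
      rcases hk with hk | hk
      · left
        have h1 : (k:ℝ) < -(A+1)*w := by
          calc (k:ℝ) < (⌊-(A+1)*w⌋ : ℝ) := by exact_mod_cast hk
            _ ≤ -(A+1)*w := Int.floor_le _
        rw [div_lt_iff₀ hw0]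
        linarith
      · right
        have h1 : A*w < (k:ℝ) := by
          calc A*w ≤ (⌈A*w⌉ : ℝ) := Int.le_ceil _
            _ < (k:ℝ) := by exact_mod_cast hk
        rw [lt_div_iff₀ hw0]
        exact h1
    rw [hz, zero_mul]
  have hS_sum : ∀ x : ℝ, SteklovS χ f r w x =
      ∑ k ∈ F, steklovW f r w ((k : ℝ) / w) * χ (w * x - (k : ℝ)) := fun x =>
    tsum_eq_sum (hterm_zero x)
  -- the majorant
  set m : ℝ → ℝ := fun x => ∑ k ∈ F, |χ (w * x - (k : ℝ))| with hmdef
  have hm_nn : ∀ x, 0 ≤ m x := fun x => Finset.sum_nonneg fun k _ => abs_nonneg _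
  have hm_le : ∀ x, m x ≤ M0 := by
    intro x
    calc m x ≤ ∑' k : ℤ, |χ (w * x - (k : ℝ))| :=
          Summable.sum_le_tsum F (fun k _ => abs_nonneg _) (hsum (w * x))
      _ ≤ M0 := hM0.1 ⟨w * x, rfl⟩
  have habs : ∀ x, |SteklovS χ f r w x| ≤ B * m x := by
    intro x
    rw [hS_sum x]
    calc |∑ k ∈ F, steklovW f r w ((k : ℝ) / w) * χ (w * x - (k : ℝ))|
        ≤ ∑ k ∈ F, |steklovW f r w ((k : ℝ) / w) * χ (w * x - (k : ℝ))| :=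
          Finset.abs_sum_le_sum_abs _ _
      _ ≤ ∑ k ∈ F, B * |χ (w * x - (k : ℝ))| := by
          apply Finset.sum_le_sum
          intro k _
          rw [abs_mul]
          exact mul_le_mul_of_nonneg_right (hstk_bd _) (abs_nonneg _)
      _ = B * m x := by rw [hmdef, Finset.mul_sum]
  -- pointwise estimate via convexity
  set a : ℝ := lam * B * M0 with hadef
  have hann : (0:ℝ) ≤ a := by positivity
  set D : ℝ := φ a / M0 with hDdef
  have hpt : ∀ x, φ (lam * |SteklovS χ f r w x|) ≤ m x * D := by
    intro x
    have ht0 : 0 ≤ m x / M0 := div_nonneg (hm_nn x) hM0pos.le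
    have ht1 : m x / M0 ≤ 1 := (div_le_one hM0pos).2 (hm_le x)
    have h1 : lam * |SteklovS χ f r w x| ≤ (m x / M0) * a := by
      have h2 : lam * |SteklovS χ f r w x| ≤ lam * (B * m x) :=
        mul_le_mul_of_nonneg_left (habs x) hlam.le
      have h3 : (m x / M0) * a = lam * (B * m x) := by
        rw [hadef]; field_simp
      linarith
    have h4 : φ (lam * |SteklovS χ f r w x|) ≤ φ ((m x / M0) * a) :=
      hφm (Set.mem_Ici.2 (by positivity)) (Set.mem_Ici.2 (mul_nonneg ht0 hann)) h1
    have h5 : φ ((m x / M0) * a) ≤ (m x / M0) * φ a :=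
      phi_mul_le_aux hφconv hφ0 ht0 ht1 hann
    have h6 : (m x / M0) * φ a = m x * D := by rw [hDdef]; ring
    linarith
  have hDnn : (0:ℝ) ≤ D := by
    rw [hDdef]
    apply div_nonneg _ hM0pos.le
    have := hφm (Set.mem_Ici.2 (le_refl (0:ℝ))) (Set.mem_Ici.2 hann) hann
    linarith [hφ0 ▸ this]
  -- integrate the majorant
  have hmono : ∀ x, ENNReal.ofReal (φ (lam * |SteklovS χ f r w x|)) ≤
      ENNReal.ofReal (m x) * ENNReal.ofReal D := by
    intro x
    rw [← ENNReal.ofReal_mul (hm_nn x)]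
    exact ENNReal.ofReal_le_ofReal (hpt x)
  have hint : ∀ k : ℤ, (∫⁻ x : ℝ, ENNReal.ofReal |χ (w * x - (k : ℝ))|) < ⊤ := by
    intro k
    have hi : Integrable (fun x : ℝ => χ (w * x - (k : ℝ))) :=
      (hχ1.comp_sub_right _).comp_mul_left' (ne_of_gt hw0)
    have h2 := hi.2
    unfold HasFiniteIntegral at h2
    simpa [← ofReal_norm_eq_enorm, Real.norm_eq_abs] using h2
  have hsplit : (∫⁻ x : ℝ, ENNReal.ofReal (m x)) =
      ∑ k ∈ F, ∫⁻ x : ℝ, ENNReal.ofReal |χ (w * x - (k : ℝ))| := by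
    have heq : ∀ x, ENNReal.ofReal (m x) =
        ∑ k ∈ F, ENNReal.ofReal |χ (w * x - (k : ℝ))| := fun x =>
      ENNReal.ofReal_sum_of_nonneg fun k _ => abs_nonneg _
    simp_rw [heq]
    exact lintegral_finset_sum F fun k _ =>
      (ENNReal.continuous_ofReal.comp ((hχ.comp
        ((continuous_const.mul continuous_id).sub continuous_const)).abs)).measurable
  have hfin : (∫⁻ x : ℝ, ENNReal.ofReal (m x)) < ⊤ := by
    rw [hsplit]
    exact ENNReal.sum_lt_top.2 fun k _ => hint k
  calc (∫⁻ x : ℝ, ENNReal.ofReal (φ (lam * |SteklovS χ f r w x|)))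
      ≤ ∫⁻ x : ℝ, ENNReal.ofReal (m x) * ENNReal.ofReal D := lintegral_mono hmono
    _ = (∫⁻ x : ℝ, ENNReal.ofReal (m x)) * ENNReal.ofReal D :=
        lintegral_mul_const' _ _ ENNReal.ofReal_ne_top
    _ < ⊤ := ENNReal.mul_lt_top hfin ENNReal.ofReal_lt_top
end

section
/- In the setting of Proposition (previous), an explicit bound holds: if supp f ⊂ [−B,B] and γ > B+1, then I^φ[λ S_w^r f] ≤ φ(λ M₀(χ)(2^r−1)‖f‖_∞)·(2γ+1)·‖χ‖₁ / M₀(χ), for every λ > 0 and every w ≥ r. -/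
open MeasureTheory Real Set Filter

lemma sum_choose_Icc (r : ℕ) (hr : 1 ≤ r) :
    (∑ m ∈ Finset.Icc 1 r, (r.choose m : ℝ)) = 2 ^ r - 1 := by
  have h0 : (0 : ℕ) ∉ Finset.Icc 1 r := by simp
  have hins : Finset.range (r + 1) = insert 0 (Finset.Icc 1 r) := by
    ext a; simp [Finset.mem_range, Finset.mem_Icc]; omega
  have h := Nat.sum_range_choose r
  rw [hins, Finset.sum_insert h0, Nat.choose_zero_right] at h
  have h' : (1 : ℝ) + ∑ m ∈ Finset.Icc 1 r, (r.choose m : ℝ) = 2 ^ r := by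
    exact_mod_cast h
  linarith

lemma steklovW_vanish {f : ℝ → ℝ} {B : ℝ} (hsupp : Function.support f ⊆ Set.Icc (-B) B)
    {r : ℕ} (hr : 1 ≤ r) {w : ℝ} (hw : (r : ℝ) ≤ w) {u : ℝ}
    (hu : u < -B - 1 ∨ B < u) : steklovW f r w u = 0 := by
  have hr0 : (0 : ℝ) < r := by exact_mod_cast hr
  have hw0 : (0 : ℝ) < w := lt_of_lt_of_le hr0 hw
  unfold steklovW
  rw [MeasureTheory.setIntegral_eq_zero_of_forall_eq_zero, mul_zero]
  intro t ht
  apply Finset.sum_eq_zero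
  intro m hm
  obtain ⟨hm1, hmr⟩ := Finset.mem_Icc.mp hm
  rw [Set.mem_Icc] at ht
  have ht0 : ∀ i, 0 ≤ t i := fun i => ht.1 i
  have ht1 : ∀ i, t i ≤ 1 / w := fun i => ht.2 i
  set s : ℝ := ((m : ℝ) / (r : ℝ)) * (∑ i, t i) with hs
  have hS0 : 0 ≤ ∑ i, t i := Finset.sum_nonneg fun i _ => ht0 i
  have hS1 : (∑ i, t i) ≤ (r : ℝ) * (1 / w) := by
    calc (∑ i, t i) ≤ ∑ _i : Fin r, (1 / w) := Finset.sum_le_sum fun i _ => ht1 i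
    _ = (r : ℝ) * (1 / w) := by simp [mul_comm]
  have hs0 : 0 ≤ s := mul_nonneg (by positivity) hS0
  have hs1 : s ≤ 1 := by
    have hmr' : (m : ℝ) / (r : ℝ) ≤ 1 := by
      rw [div_le_one hr0]; exact_mod_cast hmr
    have : s ≤ 1 * ((r : ℝ) * (1 / w)) :=
      mul_le_mul hmr' hS1 hS0 zero_le_one
    have hrw : (r : ℝ) * (1 / w) ≤ 1 := by
      rw [mul_one_div, div_le_one hw0]; exact hw
    linarith
  have hf0 : f (u + s) = 0 := by
    by_contra h
    have hmem := hsupp h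
    rw [Set.mem_Icc] at hmem
    rcases hu with hu | hu
    · linarith [hmem.1]
    · linarith [hmem.2]
  rw [hf0, mul_zero]

lemma steklovW_bound {f : ℝ → ℝ} {F : ℝ} (hF : ∀ y, |f y| ≤ F)
    {r : ℕ} (hr : 1 ≤ r) {w : ℝ} (hw0 : 0 < w) (u : ℝ) :
    |steklovW f r w u| ≤ ((2 : ℝ) ^ r - 1) * F := by
  have hF0 : 0 ≤ F := le_trans (abs_nonneg _) (hF 0)
  unfold steklovW
  rw [abs_mul, abs_pow, abs_of_pos hw0]
  have hmeas : volume (Set.Icc (0 : Fin r → ℝ) (fun _ => 1 / w)) < ⊤ := measure_Icc_lt_top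
  have hbd : ∀ t ∈ Set.Icc (0 : Fin r → ℝ) (fun _ => 1 / w),
      ‖∑ m ∈ Finset.Icc 1 r,
        (-1 : ℝ) ^ (m + 1) * (r.choose m : ℝ) * f (u + ((m : ℝ) / (r : ℝ)) * (∑ i, t i))‖
        ≤ ((2 : ℝ) ^ r - 1) * F := by
    intro t _
    calc ‖∑ m ∈ Finset.Icc 1 r,
        (-1 : ℝ) ^ (m + 1) * (r.choose m : ℝ) * f (u + ((m : ℝ) / (r : ℝ)) * (∑ i, t i))‖
        ≤ ∑ m ∈ Finset.Icc 1 r,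
          |(-1 : ℝ) ^ (m + 1) * (r.choose m : ℝ) * f (u + ((m : ℝ) / (r : ℝ)) * (∑ i, t i))| :=
          Finset.abs_sum_le_sum_abs _ _
      _ ≤ ∑ m ∈ Finset.Icc 1 r, (r.choose m : ℝ) * F := by
          apply Finset.sum_le_sum
          intro m _
          rw [abs_mul, abs_mul, abs_pow, abs_neg, abs_one, one_pow, one_mul,
            Nat.abs_cast]
          exact mul_le_mul_of_nonneg_left (hF _) (by positivity)
      _ = ((2 : ℝ) ^ r - 1) * F := by rw [← Finset.sum_mul, sum_choose_Icc r hr]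
  have hnorm := norm_setIntegral_le_of_norm_le_const (μ := volume) hmeas hbd
  rw [Real.norm_eq_abs, measureReal_def] at hnorm
  have hvol : (volume (Set.Icc (0 : Fin r → ℝ) (fun _ => 1 / w))).toReal = (1 / w) ^ r := by
    rw [Real.volume_Icc_pi_toReal (by intro i; positivity)]
    simp
  rw [hvol] at hnorm
  calc w ^ r * |∫ t in Set.Icc (0 : Fin r → ℝ) (fun _ => 1 / w),
        ∑ m ∈ Finset.Icc 1 r,
          (-1 : ℝ) ^ (m + 1) * (r.choose m : ℝ) * f (u + ((m : ℝ) / (r : ℝ)) * (∑ i, t i))|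
      ≤ w ^ r * (((2 : ℝ) ^ r - 1) * F * (1 / w) ^ r) :=
        mul_le_mul_of_nonneg_left hnorm (by positivity)
    _ = ((2 : ℝ) ^ r - 1) * F := by
        rw [one_div, inv_pow]
        field_simp [(pow_pos hw0 r).ne']

set_option maxHeartbeats 1000000 in
theorem steklov_sampling_modular_bound_explicit (φ : ℝ → ℝ)
    (hφc : Continuous φ) (hφm : MonotoneOn φ (Set.Ici 0)) (hφ0 : φ 0 = 0)
    (hφpos : ∀ u : ℝ, 0 < u → 0 < φ u) (hφtop : Tendsto φ atTop atTop)
    (hφconv : ConvexOn ℝ (Set.Ici 0) φ)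
    (χ : ℝ → ℝ) (hχ : Continuous χ) (hχ1 : Integrable χ)
    (hsum : ∀ u : ℝ, Summable fun k : ℤ => |χ (u - (k : ℝ))|)
    (M0 : ℝ) (hM0 : IsLUB (Set.range fun u : ℝ => ∑' k : ℤ, |χ (u - (k : ℝ))|) M0)
    (hM0one : 1 ≤ M0)
    (f : ℝ → ℝ) (hf : Continuous f) (B : ℝ) (hB : 0 < B)
    (hsupp : Function.support f ⊆ Set.Icc (-B) B)
    (γ : ℝ) (hγ : B + 1 < γ)
    (r : ℕ) (hr : 2 ≤ r) (lam : ℝ) (hlam : 0 < lam) (w : ℝ) (hw : (r : ℝ) ≤ w) :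
    (∫⁻ x : ℝ, ENNReal.ofReal (φ (lam * |SteklovS χ f r w x|)))
      ≤ ENNReal.ofReal
          (φ (lam * M0 * ((2 : ℝ) ^ r - 1) * (⨆ y, |f y|)) * (2 * γ + 1) *
            (∫ x : ℝ, |χ x|) / M0) := by
  -- basic positivity facts
  have hr1 : 1 ≤ r := le_trans (by norm_num) hr
  have hw1 : (1 : ℝ) ≤ w := le_trans (by exact_mod_cast hr1) hw
  have hw0 : (0 : ℝ) < w := lt_of_lt_of_le one_pos hw1
  have hM0pos : (0 : ℝ) < M0 := lt_of_lt_of_le one_pos hM0one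
  have hγ1 : (1 : ℝ) < γ := by linarith
  -- sup norm of f
  have hcs : HasCompactSupport f :=
    HasCompactSupport.intro isCompact_Icc fun x hx =>
      Function.notMem_support.mp fun h => hx (hsupp h)
  obtain ⟨Cf, hCf⟩ := (hf.abs).bounded_above_of_compact_support hcs.abs
  set F : ℝ := ⨆ y, |f y| with hFdef
  have hbdd : BddAbove (Set.range fun y => |f y|) := ⟨Cf, by rintro _ ⟨y, rfl⟩; simpa using hCf y⟩
  have hFle : ∀ y, |f y| ≤ F := fun y => le_ciSup hbdd y
  have hF0 : 0 ≤ F := le_trans (abs_nonneg _) (hFle 0)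
  set C : ℝ := ((2 : ℝ) ^ r - 1) * F with hCdef
  have h2r : (1 : ℝ) ≤ 2 ^ r := one_le_pow₀ (by norm_num)
  have hC0 : 0 ≤ C := mul_nonneg (by linarith) hF0
  set A : ℝ := lam * M0 * ((2 : ℝ) ^ r - 1) * F with hAdef
  have hA0 : 0 ≤ A := mul_nonneg (mul_nonneg (mul_nonneg hlam.le hM0pos.le) (by linarith)) hF0
  have hφA0 : 0 ≤ φ A := by
    have := hφm (Set.self_mem_Ici) (Set.mem_Ici.mpr hA0) hA0
    rw [hφ0] at this; exact this
  -- the finite index set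
  set N : ℤ := ⌊γ * w⌋ with hNdef
  have hγw1 : (1 : ℝ) ≤ γ * w := by nlinarith
  have hN1 : 1 ≤ N := by exact_mod_cast Int.le_floor.mpr (by exact_mod_cast hγw1)
  set K : Finset ℤ := Finset.Icc (-N) N with hKdef
  have hNle : (N : ℝ) ≤ γ * w := Int.floor_le _
  -- vanishing outside K
  have hvanish : ∀ k : ℤ, k ∉ K → steklovW f r w ((k : ℝ) / w) = 0 := by
    intro k hk
    rw [hKdef, Finset.mem_Icc, not_and_or] at hk
    apply steklovW_vanish hsupp hr1 hw
    rcases hk with hk | hk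
    · push_neg at hk
      left
      have hk' : (k : ℝ) + 1 ≤ -(N : ℝ) := by exact_mod_cast Int.lt_iff_add_one_le.mp hk
      have hfl : γ * w < (N : ℝ) + 1 := Int.lt_floor_add_one _
      have : (k : ℝ) < -(γ * w) := by linarith
      have hdiv : (k : ℝ) / w < -γ := by
        rw [div_lt_iff₀ hw0]
        nlinarith
      have : -γ < -B - 1 := by linarith
      linarith
    · push_neg at hk
      right
      have hk' : (N : ℝ) + 1 ≤ (k : ℝ) := by exact_mod_cast Int.lt_iff_add_one_le.mp hk
      have hfl : γ * w < (N : ℝ) + 1 := Int.lt_floor_add_one _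
      have hdiv : γ < (k : ℝ) / w := by
        rw [lt_div_iff₀ hw0]
        nlinarith
      nlinarith
  -- the sampling series as a finite sum
  have hS : ∀ x : ℝ, SteklovS χ f r w x
      = ∑ k ∈ K, steklovW f r w ((k : ℝ) / w) * χ (w * x - (k : ℝ)) := by
    intro x
    exact tsum_eq_sum fun k hk => by rw [hvanish k hk, zero_mul]
  set T : ℝ → ℝ := fun x => ∑ k ∈ K, |χ (w * x - (k : ℝ))| with hTdef
  have hT0 : ∀ x, 0 ≤ T x := fun x => Finset.sum_nonneg fun k _ => abs_nonneg _
  have hTle : ∀ x, T x ≤ M0 := by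
    intro x
    refine le_trans (Summable.sum_le_tsum K (fun k _ => abs_nonneg _) (hsum (w * x))) ?_
    exact hM0.1 ⟨w * x, rfl⟩
  -- pointwise bound
  have hpt : ∀ x : ℝ, φ (lam * |SteklovS χ f r w x|) ≤ φ A / M0 * T x := by
    intro x
    have hSle : |SteklovS χ f r w x| ≤ C * T x := by
      rw [hS x, hTdef]
      calc |∑ k ∈ K, steklovW f r w ((k : ℝ) / w) * χ (w * x - (k : ℝ))|
          ≤ ∑ k ∈ K, |steklovW f r w ((k : ℝ) / w) * χ (w * x - (k : ℝ))| :=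
            Finset.abs_sum_le_sum_abs _ _
        _ ≤ ∑ k ∈ K, C * |χ (w * x - (k : ℝ))| := by
            apply Finset.sum_le_sum
            intro k _
            rw [abs_mul]
            exact mul_le_mul_of_nonneg_right (steklovW_bound hFle hr1 hw0 _) (abs_nonneg _)
        _ = C * ∑ k ∈ K, |χ (w * x - (k : ℝ))| := by rw [Finset.mul_sum]
    set t : ℝ := T x / M0 with htdef
    have ht0 : 0 ≤ t := div_nonneg (hT0 x) hM0pos.le
    have ht1 : t ≤ 1 := by
      rw [htdef, div_le_one hM0pos]
      exact hTle x
    have hxle : lam * |SteklovS χ f r w x| ≤ t * A := by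
      have h1 : lam * |SteklovS χ f r w x| ≤ lam * (C * T x) :=
        mul_le_mul_of_nonneg_left hSle hlam.le
      have h2 : lam * (C * T x) = t * A := by
        rw [htdef, hAdef, hCdef]
        field_simp
      linarith
    have hmem1 : lam * |SteklovS χ f r w x| ∈ Set.Ici (0 : ℝ) :=
      Set.mem_Ici.mpr (mul_nonneg hlam.le (abs_nonneg _))
    have hmem2 : t * A ∈ Set.Ici (0 : ℝ) := Set.mem_Ici.mpr (mul_nonneg ht0 hA0)
    have hmono := hφm hmem1 hmem2 hxle
    have hconv : φ (t * A) ≤ t * φ A := by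
      have := hφconv.2 (Set.mem_Ici.mpr hA0) (Set.self_mem_Ici) ht0
        (by linarith : (0:ℝ) ≤ 1 - t) (by ring)
      simp only [smul_eq_mul, mul_zero, add_zero, hφ0, mul_zero] at this
      linarith
    calc φ (lam * |SteklovS χ f r w x|) ≤ φ (t * A) := hmono
      _ ≤ t * φ A := hconv
      _ = φ A / M0 * T x := by rw [htdef]; ring
  -- integral values
  have hI0 : 0 ≤ ∫ x : ℝ, |χ x| := integral_nonneg fun x => abs_nonneg _
  set I : ℝ := ∫ x : ℝ, |χ x| with hIdef
  have hint : ∀ k : ℤ, Integrable (fun x : ℝ => |χ (w * x - (k : ℝ))|) := by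
    intro k
    have h1 : Integrable (fun y : ℝ => |χ (y - (k : ℝ))|) := (hχ1.abs).comp_sub_right _
    have h2 := h1.comp_mul_left' (ne_of_gt hw0)
    simpa using h2
  have hval : ∀ k : ℤ, (∫ x : ℝ, |χ (w * x - (k : ℝ))|) = w⁻¹ * I := by
    intro k
    have h1 := MeasureTheory.Measure.integral_comp_mul_left
      (fun y : ℝ => |χ (y - (k : ℝ))|) w
    have h2 : (∫ y : ℝ, |χ (y - (k : ℝ))|) = I := by
      rw [hIdef]; exact integral_sub_right_eq_self (fun y => |χ y|) _
    rw [h2] at h1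
    simpa [abs_of_pos (inv_pos.mpr hw0), smul_eq_mul] using h1
  have hlint : ∀ k : ℤ, (∫⁻ x : ℝ, ENNReal.ofReal |χ (w * x - (k : ℝ))|)
      = ENNReal.ofReal (w⁻¹ * I) := by
    intro k
    rw [← MeasureTheory.ofReal_integral_eq_lintegral_ofReal (hint k)
      (ae_of_all _ fun x => abs_nonneg _), hval k]
  have hφM : 0 ≤ φ A / M0 := div_nonneg hφA0 hM0pos.le
  have hcard : (K.card : ℝ) ≤ (2 * γ + 1) * w := by
    have h1 : K.card = (2 * N + 1).toNat := by rw [hKdef, Int.card_Icc]; congr 1; ring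
    have h2 : ((2 * N + 1).toNat : ℤ) = 2 * N + 1 := Int.toNat_of_nonneg (by linarith)
    have h3 : ((2 * N + 1).toNat : ℝ) = 2 * (N : ℝ) + 1 := by exact_mod_cast h2
    rw [h1, h3]
    nlinarith
  calc (∫⁻ x : ℝ, ENNReal.ofReal (φ (lam * |SteklovS χ f r w x|)))
      ≤ ∫⁻ x : ℝ, ENNReal.ofReal (φ A / M0)
          * ∑ k ∈ K, ENNReal.ofReal |χ (w * x - (k : ℝ))| := by
        apply lintegral_mono
        intro x
        calc ENNReal.ofReal (φ (lam * |SteklovS χ f r w x|))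
            ≤ ENNReal.ofReal (φ A / M0 * T x) := ENNReal.ofReal_le_ofReal (hpt x)
          _ = ENNReal.ofReal (φ A / M0) * ENNReal.ofReal (T x) := ENNReal.ofReal_mul hφM
          _ = _ := by
              rw [show T x = ∑ k ∈ K, |χ (w * x - (k : ℝ))| from rfl,
                ENNReal.ofReal_sum_of_nonneg fun k _ => abs_nonneg _]
    _ = ENNReal.ofReal (φ A / M0)
          * ∑ k ∈ K, ∫⁻ x : ℝ, ENNReal.ofReal |χ (w * x - (k : ℝ))| := by
        rw [lintegral_const_mul' _ _ ENNReal.ofReal_ne_top]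
        congr 1
        apply lintegral_finset_sum'
        intro k _
        have hc : Continuous fun x : ℝ => w * x - (k : ℝ) :=
          (continuous_const.mul continuous_id).sub continuous_const
        exact (ENNReal.measurable_ofReal.comp
          ((hχ.comp hc).abs.measurable)).aemeasurable
    _ = ENNReal.ofReal (φ A / M0) * ((K.card : ENNReal) * ENNReal.ofReal (w⁻¹ * I)) := by
        simp_rw [hlint]
        rw [Finset.sum_const, nsmul_eq_mul]
    _ ≤ ENNReal.ofReal (φ A * (2 * γ + 1) * I / M0) := by
        rw [← ENNReal.ofReal_natCast K.card,
          ← ENNReal.ofReal_mul (by positivity : (0:ℝ) ≤ (K.card : ℝ)),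
          ← ENNReal.ofReal_mul hφM]
        apply ENNReal.ofReal_le_ofReal
        have h3 : (K.card : ℝ) * (w⁻¹ * I) ≤ (2 * γ + 1) * I := by
          have h4 := mul_le_mul_of_nonneg_right hcard
            (show (0:ℝ) ≤ w⁻¹ * I by positivity)
          calc (K.card : ℝ) * (w⁻¹ * I) ≤ (2 * γ + 1) * w * (w⁻¹ * I) := h4
            _ = (2 * γ + 1) * I := by field_simp
        calc φ A / M0 * ((K.card : ℝ) * (w⁻¹ * I))
            ≤ φ A / M0 * ((2 * γ + 1) * I) := mul_le_mul_of_nonneg_left h3 hφM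
          _ = φ A * (2 * γ + 1) * I / M0 := by ring
end
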